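/- Let B be a unital C*-algebra, A ⊆ B a complex linear subspace, and y ∈ A with ‖y‖ ≤ 1. Then a * y ∈ A for every a ∈ A if and only if for every x ∈ A there exists z ∈ A such that condition C(x, star y, z) holds. -/

import Mathlib

/-- The canonical C*-matrix norm on matrices over a C*-algebra `A`, obtained by viewing an
`m × n` matrix as an operator between the Hilbert C*-modules `A^n` and `A^m` (as in
Mathlib's `CStarMatrix`).  For square matrices this is the unique C*-algebra norm. -/
noncomputable def cstarMatrixNorm {A : Type*} [NonUnitalNormedRing A] [StarRing A]
    {m n : ℕ} (M : Matrix (Fin m) (Fin n) A) : ℝ :=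
  sSup {r : ℝ | ∃ v : Fin n → A, ‖∑ i, star (v i) * v i‖ ≤ 1 ∧
    r = Real.sqrt ‖∑ j, star (M.mulVec v j) * M.mulVec v j‖}

/-- Condition C(x, y, z) of Section 6: for every `b ∈ B`, the 2×4 matrix over `B` with rows
`(0, y, 1, 0)` and `(2·1, x, z, b)` has the same norm as the row matrix `(2·1, x, z, b)`. -/
def CondC {B : Type*} [NormedRing B] [StarRing B] (x y z : B) : Prop :=
  ∀ b : B, cstarMatrixNorm !![0, y, 1, 0; 2, x, z, b] = cstarMatrixNorm !![(2 : B), x, z, b]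

/-! A matrix `M` over `B` whose rows are mutually orthogonal (`M * Mᴴ` diagonal) has norm
`max_j ‖(M * Mᴴ) j j‖ ^ (1/2)`: the upper bound `(M v)* (M v) ≤ t v* v` follows from
`0 ≤ (p - t v)* (p - t v)` with `p = Mᴴ M v`, and the lower bound from testing `M` on the
adjoint of its largest row.

If `z = -(x y)`, the rows `(0, y*, 1, 0)` and `(2, x, z, b)` are orthogonal and the second one
dominates because `‖y‖ ≤ 1`, so `C(x, y*, z)` holds. Conversely, pick `b` such that
`4 + x x* + z z* + b b* = R` is a scalar. Then `C(x, y*, z)` says that the 2×4 matrix has norm `√R`,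
and testing it on the adjoint of its second row gives `‖e* e + R²‖ ≤ R²` with `e = (x y + z)*`.
This forces `x y + z = 0`, so `z` can exist in `A` only if `x y ∈ A`. -/

open Matrix

section

variable {R : Type*} [Ring R] [StarRing R]

theorem mul_conjTranspose_row (x z b : R) :
    !![(2 : R), x, z, b] * !![(2 : R), x, z, b]ᴴ =
      !![4 + x * star x + z * star z + b * star b] := by
  ext i j
  fin_cases i; fin_cases j
  simp [mul_apply, Fin.sum_univ_four]
  norm_num

theorem mul_conjTranspose_two_rows (y x z b : R) :
    !![0, y, 1, 0; 2, x, z, b] * !![0, y, 1, 0; 2, x, z, b]ᴴ =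
      !![y * star y + 1, y * star x + star z;
        x * star y + z, 4 + x * star x + z * star z + b * star b] := by
  ext i j
  fin_cases i <;> fin_cases j <;> simp [mul_apply, Fin.sum_univ_four]
  norm_num

end

section

variable {A : Type*} [NonUnitalNormedRing A] [StarRing A] {m n : ℕ}

theorem cstarMatrixNorm_le_sqrt (M : Matrix (Fin m) (Fin n) A) {C : ℝ}
    (h : ∀ v : Fin n → A, ‖star v ⬝ᵥ v‖ ≤ 1 → ‖star (M *ᵥ v) ⬝ᵥ (M *ᵥ v)‖ ≤ C) :
    cstarMatrixNorm M ≤ √C := by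
  refine Real.sSup_le ?_ (Real.sqrt_nonneg C)
  rintro r ⟨v, hv, rfl⟩
  exact Real.sqrt_le_sqrt (h v hv)

end

section

variable {B : Type*} [CStarAlgebra B] [PartialOrder B] [StarOrderedRing B] {m n : ℕ}

theorem star_mulVec_dotProduct_mulVec_le (M : Matrix (Fin m) (Fin n) B) (v : Fin n → B) {t : ℝ}
    (ht : 0 < t) (hM : (M * Mᴴ).IsDiag) (hrow : ∀ j, ‖(M * Mᴴ) j j‖ ≤ t) :
    star (M *ᵥ v) ⬝ᵥ (M *ᵥ v) ≤ t • (star v ⬝ᵥ v) := by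
  set w := M *ᵥ v
  set p := Mᴴ *ᵥ w
  have hvp : star v ⬝ᵥ p = star w ⬝ᵥ w := by
    rw [dotProduct_mulVec, ← star_mulVec]
  have hpv : star p ⬝ᵥ v = star w ⬝ᵥ w := by
    rw [star_dotProduct, hvp, ← star_dotProduct]
  have hpp : star p ⬝ᵥ p ≤ t • (star w ⬝ᵥ w) := by
    rw [star_mulVec, conjTranspose_conjTranspose, ← dotProduct_mulVec, mulVec_mulVec,
      ← hM.diagonal_diag, dotProduct, dotProduct, Finset.smul_sum]
    refine Finset.sum_le_sum fun j _ => ?_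
    have hsa : IsSelfAdjoint ((M * Mᴴ) j j) :=
      (isHermitian_mul_conjTranspose_self M).apply j j
    calc star w j * (diagonal (diag (M * Mᴴ)) *ᵥ w) j
        = star (w j) * (M * Mᴴ) j j * w j := by rw [mulVec_diagonal, mul_assoc]; rfl
      _ ≤ ‖(M * Mᴴ) j j‖ • (star (w j) * w j) := CStarAlgebra.star_left_conjugate_le_norm_smul hsa
      _ ≤ t • (star (w j) * w j) := smul_le_smul_of_nonneg_right (hrow j) (star_mul_self_nonneg _)
  have hexp : star (p - t • v) ⬝ᵥ (p - t • v)
      = star p ⬝ᵥ p - t • (star p ⬝ᵥ v) - t • (star v ⬝ᵥ p) + (t * t) • (star v ⬝ᵥ v) := by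
    simp only [star_sub, star_smul, star_trivial, sub_dotProduct, dotProduct_sub, smul_dotProduct,
      dotProduct_smul]
    module
  have key : 0 ≤ t • (t • (star v ⬝ᵥ v) - star w ⬝ᵥ w) := by
    have h0 := dotProduct_star_self_nonneg (p - t • v)
    rw [hexp, hvp, hpv] at h0
    calc (0 : B) ≤ _ := h0
      _ ≤ t • (star w ⬝ᵥ w) - t • (star w ⬝ᵥ w) - t • (star w ⬝ᵥ w) + (t * t) • (star v ⬝ᵥ v) := by
        gcongr
      _ = _ := by rw [smul_sub, smul_smul]; abel
  exact sub_nonneg.mp ((smul_nonneg_iff_nonneg_of_pos_left ht).mp key)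

theorem norm_star_mulVec_dotProduct_mulVec_le (M : Matrix (Fin m) (Fin n) B) (v : Fin n → B) :
    ‖star (M *ᵥ v) ⬝ᵥ (M *ᵥ v)‖ ≤ (∑ j, (‖(M * Mᴴ) j j‖ + 1)) * ‖star v ⬝ᵥ v‖ := by
  rw [Finset.sum_mul]
  refine (norm_sum_le _ _).trans (Finset.sum_le_sum fun j _ => ?_)
  have ht : 0 < ‖(M * Mᴴ) j j‖ + 1 := by positivity
  have hrow := star_mulVec_dotProduct_mulVec_le (M.submatrix (fun _ : Fin 1 => j) id) v ht
    (isDiag_of_subsingleton _) fun _ => le_add_of_nonneg_right zero_le_one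
  rw [dotProduct, Fin.sum_univ_one] at hrow
  calc ‖star (M *ᵥ v) j * (M *ᵥ v) j‖
      ≤ ‖(‖(M * Mᴴ) j j‖ + 1) • (star v ⬝ᵥ v)‖ :=
        CStarAlgebra.norm_le_norm_of_nonneg_of_le (star_mul_self_nonneg _) hrow
    _ = _ := by rw [norm_smul, Real.norm_of_nonneg ht.le]

theorem sqrt_le_cstarMatrixNorm (M : Matrix (Fin m) (Fin n) B) {v : Fin n → B}
    (hv : ‖star v ⬝ᵥ v‖ ≤ 1) : √‖star (M *ᵥ v) ⬝ᵥ (M *ᵥ v)‖ ≤ cstarMatrixNorm M := by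
  refine le_csSup ⟨√(∑ j, (‖(M * Mᴴ) j j‖ + 1)), ?_⟩ ⟨v, hv, rfl⟩
  rintro r ⟨v', hv', rfl⟩
  refine Real.sqrt_le_sqrt ((norm_star_mulVec_dotProduct_mulVec_le M v').trans ?_)
  exact mul_le_of_le_one_right (by positivity) hv'

theorem cstarMatrixNorm_nonneg (M : Matrix (Fin m) (Fin n) B) : 0 ≤ cstarMatrixNorm M :=
  (Real.sqrt_nonneg _).trans (sqrt_le_cstarMatrixNorm M (v := 0) (by simp))

theorem eq_zero_of_star_dotProduct_self_eq_zero {v : Fin n → B} (hv : star v ⬝ᵥ v = 0) : v = 0 := by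
  have := (Finset.sum_eq_zero_iff_of_nonneg fun i _ => star_mul_self_nonneg (v i)).mp hv
  ext i
  exact CStarRing.star_mul_self_eq_zero_iff _ |>.mp (this i (Finset.mem_univ i))

theorem norm_star_mulVec_dotProduct_mulVec_le_cstarMatrixNorm_sq (M : Matrix (Fin m) (Fin n) B)
    (w : Fin n → B) :
    ‖star (M *ᵥ w) ⬝ᵥ (M *ᵥ w)‖ ≤ cstarMatrixNorm M ^ 2 * ‖star w ⬝ᵥ w‖ := by
  rcases (norm_nonneg (star w ⬝ᵥ w)).eq_or_lt with hw | hw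
  · rw [eq_zero_of_star_dotProduct_self_eq_zero (norm_eq_zero.mp hw.symm)]
    simp
  set s := √‖star w ⬝ᵥ w‖
  have hs : 0 < s := Real.sqrt_pos.mpr hw
  have hss : s⁻¹ * s⁻¹ * ‖star w ⬝ᵥ w‖ = 1 := by
    rw [← mul_inv, Real.mul_self_sqrt hw.le, inv_mul_cancel₀ hw.ne']
  have hv : ‖star (s⁻¹ • w) ⬝ᵥ (s⁻¹ • w)‖ ≤ 1 := by
    simp only [star_smul, star_trivial, smul_dotProduct, dotProduct_smul, smul_smul, norm_smul,
      Real.norm_eq_abs, abs_mul_self, hss, le_refl]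
  have := (Real.sqrt_le_iff.mp (sqrt_le_cstarMatrixNorm M hv)).2
  simp only [mulVec_smul, star_smul, star_trivial, smul_dotProduct, dotProduct_smul, smul_smul,
    norm_smul, Real.norm_eq_abs, abs_mul_self] at this
  calc ‖star (M *ᵥ w) ⬝ᵥ (M *ᵥ w)‖
      = (s⁻¹ * s⁻¹ * ‖star (M *ᵥ w) ⬝ᵥ (M *ᵥ w)‖) * ‖star w ⬝ᵥ w‖ := by
        linear_combination (‖star (M *ᵥ w) ⬝ᵥ (M *ᵥ w)‖) * hss.symm
    _ ≤ cstarMatrixNorm M ^ 2 * ‖star w ⬝ᵥ w‖ := by gcongr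

theorem sqrt_norm_mul_conjTranspose_apply_le (M : Matrix (Fin m) (Fin n) B) (k : Fin m) :
    √‖(M * Mᴴ) k k‖ ≤ cstarMatrixNorm M := by
  set d := (M * Mᴴ) k k
  set w : Fin n → B := fun i => Mᴴ i k
  have hd : IsSelfAdjoint d := (isHermitian_mul_conjTranspose_self M).apply k k
  have hw : star w ⬝ᵥ w = d := by simp [w, d, dotProduct, mul_apply]
  have hMw : (M *ᵥ w) k = d := rfl
  have hdd : ‖d‖ * ‖d‖ ≤ cstarMatrixNorm M ^ 2 * ‖d‖ := by
    calc ‖d‖ * ‖d‖ = ‖star ((M *ᵥ w) k) * (M *ᵥ w) k‖ := by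
          rw [hMw, CStarRing.norm_star_mul_self]
      _ ≤ ‖star (M *ᵥ w) ⬝ᵥ (M *ᵥ w)‖ :=
          CStarAlgebra.norm_le_norm_of_nonneg_of_le (star_mul_self_nonneg _)
            (Finset.single_le_sum (f := fun j => star (M *ᵥ w) j * (M *ᵥ w) j)
              (fun j _ => star_mul_self_nonneg _) (Finset.mem_univ k))
      _ ≤ cstarMatrixNorm M ^ 2 * ‖d‖ := by
          simpa [hw] using norm_star_mulVec_dotProduct_mulVec_le_cstarMatrixNorm_sq M w
  rcases (norm_nonneg d).eq_or_lt with h0 | hpos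
  · rw [← h0, Real.sqrt_zero]; exact cstarMatrixNorm_nonneg M
  · exact Real.sqrt_le_iff.mpr ⟨cstarMatrixNorm_nonneg M, le_of_mul_le_mul_right hdd hpos⟩

theorem cstarMatrixNorm_le_of_isDiag (M : Matrix (Fin m) (Fin n) B) (hM : (M * Mᴴ).IsDiag)
    {t : ℝ} (hrow : ∀ j, ‖(M * Mᴴ) j j‖ ≤ t) : cstarMatrixNorm M ≤ √t := by
  refine le_of_forall_gt_imp_ge_of_dense fun c hc => ?_
  have hc0 : 0 < c := (Real.sqrt_nonneg t).trans_lt hc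
  have htc : t < c ^ 2 := (Real.sqrt_lt' hc0).mp hc
  calc cstarMatrixNorm M ≤ √(c ^ 2) := by
        refine cstarMatrixNorm_le_sqrt M fun v hv => ?_
        have hle := star_mulVec_dotProduct_mulVec_le M v (by positivity) hM
          fun j => (hrow j).trans htc.le
        calc ‖star (M *ᵥ v) ⬝ᵥ (M *ᵥ v)‖ ≤ ‖(c ^ 2) • (star v ⬝ᵥ v)‖ :=
              CStarAlgebra.norm_le_norm_of_nonneg_of_le (dotProduct_star_self_nonneg _) hle
          _ ≤ c ^ 2 := by
              rw [norm_smul, Real.norm_of_nonneg (sq_nonneg c)]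
              exact mul_le_of_le_one_right (sq_nonneg c) hv
    _ = c := Real.sqrt_sq hc0.le

theorem cstarMatrixNorm_eq_of_isDiag (M : Matrix (Fin m) (Fin n) B) (hM : (M * Mᴴ).IsDiag)
    (k : Fin m) (hk : ∀ j, ‖(M * Mᴴ) j j‖ ≤ ‖(M * Mᴴ) k k‖) :
    cstarMatrixNorm M = √‖(M * Mᴴ) k k‖ :=
  le_antisymm (cstarMatrixNorm_le_of_isDiag M hM hk) (sqrt_norm_mul_conjTranspose_apply_le M k)

theorem cstarMatrixNorm_row (x z b : B) :
    cstarMatrixNorm !![(2 : B), x, z, b] = √‖4 + x * star x + z * star z + b * star b‖ := by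
  rw [cstarMatrixNorm_eq_of_isDiag _ (isDiag_of_subsingleton _) 0
    fun j => by rw [Subsingleton.elim j 0], mul_conjTranspose_row]
  rfl

theorem star_mul_self_le_one {y : B} (hy : ‖y‖ ≤ 1) : star y * y ≤ 1 :=
  (CStarAlgebra.norm_le_one_iff_of_nonneg _ (star_mul_self_nonneg y)).mp <| by
    rw [CStarRing.norm_star_mul_self]; exact mul_le_one₀ hy (norm_nonneg y) hy

theorem condC_of_mul_add_eq_zero {x y z : B} (hy : ‖y‖ ≤ 1) (hz : x * y + z = 0) :
    CondC x (star y) z := by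
  intro b
  have hG := mul_conjTranspose_two_rows (star y) x z b
  rw [star_star, ← star_mul, ← star_add, hz, star_zero] at hG
  have hdiag : (!![0, star y, 1, 0; 2, x, z, b] * !![0, star y, 1, 0; 2, x, z, b]ᴴ).IsDiag := by
    rw [hG]
    intro i j hij
    fin_cases i <;> fin_cases j <;> simp_all
  have hdom : star y * y + 1 ≤ 4 + x * star x + z * star z + b * star b :=
    calc star y * y + 1 ≤ 1 + 1 := by gcongr; exact star_mul_self_le_one hy
      _ ≤ 4 := by
          rw [show (4 : B) = (1 + 1) + (1 + 1) by norm_num]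
          exact le_add_of_nonneg_left (add_nonneg zero_le_one zero_le_one)
      _ ≤ _ := by
          simp only [add_assoc]
          exact le_add_of_nonneg_right <| add_nonneg (mul_star_self_nonneg _) <|
            add_nonneg (mul_star_self_nonneg _) (mul_star_self_nonneg _)
  rw [cstarMatrixNorm_row, cstarMatrixNorm_eq_of_isDiag _ hdiag 1, hG]
  · rfl
  rw [hG]
  refine Fin.forall_fin_two.mpr ⟨?_, le_rfl⟩
  exact CStarAlgebra.norm_le_norm_of_nonneg_of_le
    (add_nonneg (star_mul_self_nonneg y) zero_le_one) hdom

theorem eq_zero_of_norm_star_mul_self_add_algebraMap_le {e : B} {r : ℝ}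
    (h : ‖star e * e + algebraMap ℝ B r‖ ≤ r) : e = 0 := by
  have hr : 0 ≤ r := (norm_nonneg _).trans h
  have hle : star e * e + algebraMap ℝ B r ≤ algebraMap ℝ B r :=
    (IsSelfAdjoint.le_algebraMap_norm_self
      (add_nonneg (star_mul_self_nonneg e) (algebraMap_nonneg B hr)).isSelfAdjoint).trans
      (algebraMap_mono B h)
  have hee : star e * e = 0 :=
    le_antisymm (by simpa using hle) (star_mul_self_nonneg e)
  exact (CStarRing.star_mul_self_eq_zero_iff e).mp hee

theorem exists_add_mul_star_eq_algebraMap {d : B} (hd : IsSelfAdjoint d) {r : ℝ} (hr : ‖d‖ ≤ r) :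
    ∃ b : B, d + b * star b = algebraMap ℝ B r := by
  have hsub : 0 ≤ algebraMap ℝ B r - d :=
    sub_nonneg.mpr (hd.le_algebraMap_norm_self.trans (algebraMap_mono B hr))
  refine ⟨CFC.sqrt (algebraMap ℝ B r - d), ?_⟩
  rw [(CFC.sqrt_nonneg _).isSelfAdjoint.star_eq, ← sq, CFC.sq_sqrt _ hsub, add_sub_cancel]

theorem CondC.mul_eq_neg {x y z : B} (h : CondC x (star y) z) : x * y = -z := by
  nontriviality B
  set d := 4 + x * star x + z * star z
  set R := ‖d‖ + 1
  have hR : 0 < R := by positivity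
  have hd : 0 ≤ d := add_nonneg (add_nonneg (by norm_num) (mul_star_self_nonneg x))
    (mul_star_self_nonneg z)
  obtain ⟨b, hrow⟩ := exists_add_mul_star_eq_algebraMap hd.isSelfAdjoint
    (le_add_of_nonneg_right zero_le_one : ‖d‖ ≤ R)
  set M : Matrix (Fin 2) (Fin 4) B := !![0, star y, 1, 0; 2, x, z, b]
  have hG := mul_conjTranspose_two_rows (star y) x z b
  rw [star_star, ← star_mul, ← star_add, hrow] at hG
  have hw : star (star (M 1)) ⬝ᵥ star (M 1) = algebraMap ℝ B R := by
    rw [star_star]; exact congrFun (congrFun hG 1) 1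
  have hMw : M *ᵥ star (M 1) = ![star (x * y + z), algebraMap ℝ B R] := by
    ext j
    fin_cases j
    exacts [congrFun (congrFun hG 0) 1, congrFun (congrFun hG 1) 1]
  have hM : cstarMatrixNorm M = √R := by
    rw [h b, cstarMatrixNorm_row, hrow, norm_algebraMap', Real.norm_of_nonneg hR.le]
  have hbound := norm_star_mulVec_dotProduct_mulVec_le_cstarMatrixNorm_sq M (star (M 1))
  rw [hMw, hw, hM, Real.sq_sqrt hR.le, norm_algebraMap', Real.norm_of_nonneg hR.le] at hbound
  have he : star (x * y + z) = 0 := by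
    refine eq_zero_of_norm_star_mul_self_add_algebraMap_le (r := R * R) ?_
    simpa [dotProduct, Fin.sum_univ_two, ← algebraMap_star_comm] using hbound
  exact eq_neg_of_add_eq_zero_left (star_eq_zero.mp he)

end

theorem right_mult_iff_general {B : Type*} [CStarAlgebra B] (A : Submodule ℂ B) (y : B)
    (hy1 : ‖y‖ ≤ 1) :
    (∀ a ∈ A, a * y ∈ A) ↔ (∀ x ∈ A, ∃ z ∈ A, CondC x (star y) z) := by
  let _ : PartialOrder B := CStarAlgebra.spectralOrder B
  have : StarOrderedRing B := CStarAlgebra.spectralOrderedRing B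
  constructor
  · intro h x hx
    exact ⟨-(x * y), A.neg_mem (h x hx), condC_of_mul_add_eq_zero hy1 (add_neg_cancel _)⟩
  · intro h a ha
    obtain ⟨z, hz, hC⟩ := h a ha
    rw [hC.mul_eq_neg]
    exact A.neg_mem hz

/-- Corollary 6.2 (2): for a contraction `y ∈ A`, `A y ⊆ A` iff for every `x ∈ A`
there is `z ∈ A` with `C(x, y*, z)`. -/
theorem right_mult_iff {B : Type*} [CStarAlgebra B] (A : Submodule ℂ B) (y : B)
    (hy : y ∈ A) (hy1 : ‖y‖ ≤ 1) :
    (∀ a ∈ A, a * y ∈ A) ↔ (∀ x ∈ A, ∃ z ∈ A, CondC x (star y) z) :=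
  right_mult_iff_general A y hy1
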